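/- Let A ∈ ℝ^{n×n}, B ∈ ℝ^{n×m}, X ⊆ ℝⁿ, U ⊆ ℝᵐ, and let T ⊆ X be control invariant. If there exists a feasible N-step plan from x₀, then there exist infinite sequences (x_k)_{k≥0} and (u_k)_{k≥0} with x_{k+1} = A x_k + B u_k, such that for every k ≥ 0 there is a feasible N-step plan from x_k whose first input is u_k; in particular x_k ∈ X and u_k ∈ U for all k ≥ 0. -/

import Mathlib

/-- A feasible `N`-step plan for the system `x⁺ = A x + B u` from initial point `x₀`,
with state constraint set `X`, input constraint set `U`, and terminal set `T`. -/
def FeasiblePlan {n m : ℕ} (A : Matrix (Fin n) (Fin n) ℝ) (B : Matrix (Fin n) (Fin m) ℝ)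
    (X : Set (Fin n → ℝ)) (U : Set (Fin m → ℝ)) (T : Set (Fin n → ℝ)) (N : ℕ)
    (x₀ : Fin n → ℝ) (x : ℕ → Fin n → ℝ) (u : ℕ → Fin m → ℝ) : Prop :=
  x 0 = x₀ ∧
  (∀ p < N, x (p + 1) = A.mulVec (x p) + B.mulVec (u p)) ∧
  (∀ p < N, x p ∈ X) ∧
  (∀ p < N, u p ∈ U) ∧
  x N ∈ T

/-! Extending a feasible plan by one step inside the control invariant terminal set `T ⊆ X`
gives a feasible `(N + 1)`-step plan that is still a feasible `N`-step plan. Its tail is a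
feasible `N`-step plan from the successor state, so the receding-horizon feedback that applies
the first input of such a plan keeps the closed loop feasible forever. -/

def IsControlInvariant {n m : ℕ} (A : Matrix (Fin n) (Fin n) ℝ) (B : Matrix (Fin n) (Fin m) ℝ)
    (U : Set (Fin m → ℝ)) (T : Set (Fin n → ℝ)) : Prop :=
  ∀ x ∈ T, ∃ u ∈ U, A.mulVec x + B.mulVec u ∈ T

def closedLoop {n m : ℕ} (A : Matrix (Fin n) (Fin n) ℝ) (B : Matrix (Fin n) (Fin m) ℝ)
    (κ : (Fin n → ℝ) → Fin m → ℝ) (x₀ : Fin n → ℝ) : ℕ → Fin n → ℝ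
  | 0 => x₀
  | k + 1 => A.mulVec (closedLoop A B κ x₀ k) + B.mulVec (κ (closedLoop A B κ x₀ k))

theorem closedLoop_mem {n m : ℕ} {A : Matrix (Fin n) (Fin n) ℝ} {B : Matrix (Fin n) (Fin m) ℝ}
    {κ : (Fin n → ℝ) → Fin m → ℝ} {S : Set (Fin n → ℝ)}
    (hS : ∀ z ∈ S, A.mulVec z + B.mulVec (κ z) ∈ S) {x₀ : Fin n → ℝ} (hx₀ : x₀ ∈ S) :
    ∀ k, closedLoop A B κ x₀ k ∈ S
  | 0 => hx₀
  | k + 1 => hS _ (closedLoop_mem hS hx₀ k)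

namespace FeasiblePlan

variable {n m N : ℕ} {A : Matrix (Fin n) (Fin n) ℝ} {B : Matrix (Fin n) (Fin m) ℝ}
  {X : Set (Fin n → ℝ)} {U : Set (Fin m → ℝ)} {T : Set (Fin n → ℝ)}
  {x₀ : Fin n → ℝ} {x x' : ℕ → Fin n → ℝ} {u u' : ℕ → Fin m → ℝ}

theorem congr (h : FeasiblePlan A B X U T N x₀ x u) (hx : ∀ p ≤ N, x' p = x p)
    (hu : ∀ p < N, u' p = u p) : FeasiblePlan A B X U T N x₀ x' u' := by
  obtain ⟨h0, hdyn, hX, hU, hT⟩ := h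
  refine ⟨(hx 0 N.zero_le).trans h0, fun p hp => ?_, fun p hp => ?_, fun p hp => ?_, ?_⟩
  · rw [hx (p + 1) hp, hx p hp.le, hu p hp]
    exact hdyn p hp
  · exact hx p hp.le ▸ hX p hp
  · exact hu p hp ▸ hU p hp
  · exact hx N le_rfl ▸ hT

theorem snoc (h : FeasiblePlan A B X U T N x₀ x u) (hxN : x N ∈ X) {w : Fin m → ℝ}
    (hw : w ∈ U) (hwT : A.mulVec (x N) + B.mulVec w ∈ T) :
    FeasiblePlan A B X U T (N + 1) x₀
      (Function.update x (N + 1) (A.mulVec (x N) + B.mulVec w)) (Function.update u N w) := by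
  obtain ⟨h0, hdyn, hX, hU, hT⟩ := h
  refine ⟨by simpa using h0, fun p hp => ?_, fun p hp => ?_, fun p hp => ?_, by simpa using hwT⟩
  · rcases Nat.lt_succ_iff_lt_or_eq.1 hp with hp | rfl
    · simpa [Function.update_of_ne, hp.ne, (hp.trans N.lt_succ_self).ne] using hdyn p hp
    · simp
  · rcases Nat.lt_succ_iff_lt_or_eq.1 hp with hp | rfl
    · simpa [(hp.trans N.lt_succ_self).ne] using hX p hp
    · simpa using hxN
  · rcases Nat.lt_succ_iff_lt_or_eq.1 hp with hp | rfl
    · simpa [hp.ne] using hU p hp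
    · simpa using hw

theorem exists_succ_of_isControlInvariant (hTX : T ⊆ X) (hT : IsControlInvariant A B U T)
    (h : FeasiblePlan A B X U T N x₀ x u) :
    ∃ x' u', FeasiblePlan A B X U T N x₀ x' u' ∧ FeasiblePlan A B X U T (N + 1) x₀ x' u' := by
  obtain ⟨w, hwU, hwT⟩ := hT _ h.2.2.2.2
  refine ⟨_, _, h.congr (fun p hp => ?_) (fun p hp => ?_), h.snoc (hTX h.2.2.2.2) hwU hwT⟩
  · exact Function.update_of_ne (by omega) _ _
  · exact Function.update_of_ne hp.ne _ _

theorem tail (h : FeasiblePlan A B X U T (N + 1) x₀ x u) :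
    FeasiblePlan A B X U T N (A.mulVec x₀ + B.mulVec (u 0))
      (fun p => x (p + 1)) (fun p => u (p + 1)) := by
  obtain ⟨h0, hdyn, hX, hU, hT⟩ := h
  refine ⟨h0 ▸ hdyn 0 N.succ_pos, fun p hp => hdyn (p + 1) (by omega),
    fun p hp => hX (p + 1) (by omega), fun p hp => hU (p + 1) (by omega), hT⟩

theorem start_mem (h : FeasiblePlan A B X U T (N + 1) x₀ x u) : x₀ ∈ X :=
  h.1 ▸ h.2.2.1 0 N.succ_pos

theorem input_zero_mem (h : FeasiblePlan A B X U T (N + 1) x₀ x u) : u 0 ∈ U :=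
  h.2.2.2.1 0 N.succ_pos

end FeasiblePlan

/-- Lemma 1 (recursive feasibility): if `T ⊆ X` is control invariant and there exists a
feasible `N`-step plan from `x₀`, then there are infinite closed-loop sequences
`(xs k)`, `(us k)` with `xs (k+1) = A xs k + B us k`, such that at every time `k` there is
a feasible `N`-step plan from `xs k` whose first input is `us k`; in particular
`xs k ∈ X` and `us k ∈ U` for all `k`. -/
theorem mpc_recursively_feasible {n m N : ℕ}
    (A : Matrix (Fin n) (Fin n) ℝ) (B : Matrix (Fin n) (Fin m) ℝ)
    (X : Set (Fin n → ℝ)) (U : Set (Fin m → ℝ)) (T : Set (Fin n → ℝ))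
    (hTX : T ⊆ X)
    (hInv : ∀ x ∈ T, ∃ u ∈ U, A.mulVec x + B.mulVec u ∈ T)
    (x₀ : Fin n → ℝ)
    (hfeas : ∃ x u, FeasiblePlan A B X U T N x₀ x u) :
    ∃ (xs : ℕ → Fin n → ℝ) (us : ℕ → Fin m → ℝ),
      xs 0 = x₀ ∧
      (∀ k, xs (k + 1) = A.mulVec (xs k) + B.mulVec (us k)) ∧
      (∀ k, ∃ x u, FeasiblePlan A B X U T N (xs k) x u ∧ u 0 = us k) ∧
      (∀ k, xs k ∈ X) ∧
      (∀ k, us k ∈ U) := by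
  set S := {z | ∃ x u, FeasiblePlan A B X U T N z x u}
  choose! px pu hN hN1 using fun z (⟨_, _, hz⟩ : z ∈ S) =>
    hz.exists_succ_of_isControlInvariant hTX hInv
  have hS : ∀ z ∈ S, A.mulVec z + B.mulVec (pu z 0) ∈ S :=
    fun z hz => ⟨_, _, (hN1 z hz).tail⟩
  have hxs := closedLoop_mem hS hfeas
  exact ⟨closedLoop A B (pu · 0) x₀, fun k => pu (closedLoop A B (pu · 0) x₀ k) 0, rfl,
    fun k => rfl, fun k => ⟨_, _, hN _ (hxs k), rfl⟩, fun k => (hN1 _ (hxs k)).start_mem,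
    fun k => (hN1 _ (hxs k)).input_zero_mem⟩
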